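/- arXiv:math/9808107 — 4 statements merged into one kernel-verified Lean document; each statement's English description precedes it below -/
import Mathlib

section
/- Let F be a field, n a positive even integer, and x_1, …, x_n nonzero pairwise distinct elements of F. Then (x_1⋯x_n)^2 · ∑_{k=1}^n ∑_{l=1, l≠k}^n x_k^{−2} x_l^{−1} · ∏_{i=1, i≠k}^n (1 − x_i x_k)/(x_i − x_k) · ∏_{i=1, i≠k,l}^n (1 − x_i x_l)/(x_i − x_l) = 1 − x_1⋯x_n. -/
open Finset

namespace Lemma2Aux

variable {F : Type*} [Field F] {ι : Type*} [DecidableEq ι]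

/-- `Q x s l = ∏_{i ∈ s, i ≠ l} (1 - x i x l)/(x i - x l)`. -/
def Q (x : ι → F) (s : Finset ι) (l : ι) : F :=
  ∏ i ∈ s.erase l, (1 - x i * x l) / (x i - x l)

/-- `H x s z = ∏_{i ∈ s} (1 - x i z)/(x i - z)`. -/
def H (x : ι → F) (s : Finset ι) (z : F) : F :=
  ∏ i ∈ s, (1 - x i * z) / (x i - z)

theorem claimH (x : ι → F) (s : Finset ι) :
    ∀ z : F, (∀ i ∈ s, x i ≠ z) → (∀ i ∈ s, ∀ j ∈ s, x i = x j → i = j) →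
    ∑ l ∈ s, (1 - x l ^ 2) * Q x s l / (x l - z) = H x s z - ∏ i ∈ s, x i := by
  induction s using Finset.induction_on with
  | empty => simp [H]
  | @insert a s ha ih =>
    intro z hz hinj
    have hmem : ∀ i ∈ s, i ∈ insert a s := fun i hi => mem_insert_of_mem hi
    have hz' : ∀ i ∈ s, x i ≠ z := fun i hi => hz i (hmem i hi)
    have hinj' : ∀ i ∈ s, ∀ j ∈ s, x i = x j → i = j := fun i hi j hj =>
      hinj i (hmem i hi) j (hmem j hj)
    have hay : ∀ l ∈ s, x l ≠ x a := by
      intro l hl h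
      exact ha ((hinj l (hmem l hl) a (mem_insert_self a s) h) ▸ hl)
    have hyz : x a - z ≠ 0 := sub_ne_zero.mpr (hz a (mem_insert_self a s))
    have hQa : Q x (insert a s) a = H x s (x a) := by
      simp [Q, H, Finset.erase_insert ha]
    have hQl : ∀ l ∈ s, Q x (insert a s) l
        = (1 - x a * x l) / (x a - x l) * Q x s l := by
      intro l hl
      have hal : l ≠ a := fun h => ha (h ▸ hl)
      have hna : a ∉ s.erase l := fun h => ha (mem_of_mem_erase h)
      rw [Q, Finset.erase_insert_of_ne (Ne.symm hal), Finset.prod_insert hna]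
      rfl
    rw [Finset.sum_insert ha, Finset.prod_insert ha, hQa]
    have key : ∀ l ∈ s,
        (1 - x l ^ 2) * Q x (insert a s) l / (x l - z)
          = (1 - x a * z) / (x a - z) * ((1 - x l ^ 2) * Q x s l / (x l - z))
            - (1 - x a ^ 2) / (x a - z) * ((1 - x l ^ 2) * Q x s l / (x l - x a)) := by
      intro l hl
      have h1 : x l - z ≠ 0 := sub_ne_zero.mpr (hz' l hl)
      have h2 : x l - x a ≠ 0 := sub_ne_zero.mpr (hay l hl)
      have h3 : x a - x l ≠ 0 := sub_ne_zero.mpr (Ne.symm (hay l hl))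
      rw [hQl l hl]
      field_simp
      ring
    rw [Finset.sum_congr rfl key, Finset.sum_sub_distrib, ← Finset.mul_sum, ← Finset.mul_sum,
      ih z hz' hinj', ih (x a) hay hinj']
    have hH : H x (insert a s) z = (1 - x a * z) / (x a - z) * H x s z := by
      rw [H, Finset.prod_insert ha]; rfl
    rw [hH]
    field_simp
    ring

theorem STU (x : ι → F) (s : Finset ι) :
    (∀ i ∈ s, x i ≠ 0) → (∀ i ∈ s, ∀ j ∈ s, x i = x j → i = j) →
    (∑ l ∈ s, Q x s l = if Even s.card then 0 else 1)
    ∧ (∑ l ∈ s, (x l)⁻¹ * Q x s l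
        = (∏ i ∈ s, x i)⁻¹ - if Even s.card then 1 else 0)
    ∧ (∑ l ∈ s, x l * Q x s l
        = (∏ i ∈ s, x i) - if Even s.card then 1 else 0) := by
  induction s using Finset.induction_on with
  | empty => simp
  | @insert a s ha ih =>
    intro hx0 hinj
    have hmem : ∀ i ∈ s, i ∈ insert a s := fun i hi => mem_insert_of_mem hi
    have hx0' : ∀ i ∈ s, x i ≠ 0 := fun i hi => hx0 i (hmem i hi)
    have hinj' : ∀ i ∈ s, ∀ j ∈ s, x i = x j → i = j := fun i hi j hj =>
      hinj i (hmem i hi) j (hmem j hj)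
    have hay : ∀ l ∈ s, x l ≠ x a := by
      intro l hl h
      exact ha ((hinj l (hmem l hl) a (mem_insert_self a s) h) ▸ hl)
    have hy0 : x a ≠ 0 := hx0 a (mem_insert_self a s)
    have hP0 : (∏ i ∈ s, x i) ≠ 0 := Finset.prod_ne_zero_iff.mpr hx0'
    obtain ⟨hS, hT, hU⟩ := ih hx0' hinj'
    have hH := claimH x s (x a) hay hinj'
    have hQa : Q x (insert a s) a = H x s (x a) := by
      simp [Q, H, Finset.erase_insert ha]
    have hQl : ∀ l ∈ s, Q x (insert a s) l
        = (1 - x a * x l) / (x a - x l) * Q x s l := by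
      intro l hl
      have hal : l ≠ a := fun h => ha (h ▸ hl)
      have hna : a ∉ s.erase l := fun h => ha (mem_of_mem_erase h)
      rw [Q, Finset.erase_insert_of_ne (Ne.symm hal), Finset.prod_insert hna]
      rfl
    have key : ∀ c : F,
        (∑ l ∈ s, Q x s l = 1 - c) →
        (∑ l ∈ s, (x l)⁻¹ * Q x s l = (∏ i ∈ s, x i)⁻¹ - c) →
        (∑ l ∈ s, x l * Q x s l = (∏ i ∈ s, x i) - c) →
        (∑ l ∈ insert a s, Q x (insert a s) l = c)
        ∧ (∑ l ∈ insert a s, (x l)⁻¹ * Q x (insert a s) l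
            = (∏ i ∈ insert a s, x i)⁻¹ - (1 - c))
        ∧ (∑ l ∈ insert a s, x l * Q x (insert a s) l
            = (∏ i ∈ insert a s, x i) - (1 - c)) := by
      intro c hS hT hU
      refine ⟨?_, ?_, ?_⟩
      · -- S component
        have e1 : ∀ l ∈ s, Q x (insert a s) l
            = -(x l * Q x s l) - (1 - x l ^ 2) * Q x s l / (x l - x a) := by
          intro l hl
          have h2 : x l - x a ≠ 0 := sub_ne_zero.mpr (hay l hl)
          have h3 : x a - x l ≠ 0 := sub_ne_zero.mpr (Ne.symm (hay l hl))
          rw [hQl l hl]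
          field_simp
          ring
        rw [Finset.sum_insert ha, hQa, Finset.sum_congr rfl e1, Finset.sum_sub_distrib,
          Finset.sum_neg_distrib, hU, hH]
        ring
      · -- T component
        have e2 : ∀ l ∈ s, (x l)⁻¹ * Q x (insert a s) l
            = -Q x s l + (x a)⁻¹ * ((x l)⁻¹ * Q x s l) - (x a)⁻¹ * (x l * Q x s l)
              - (x a)⁻¹ * ((1 - x l ^ 2) * Q x s l / (x l - x a)) := by
          intro l hl
          have h2 : x l - x a ≠ 0 := sub_ne_zero.mpr (hay l hl)
          have h3 : x a - x l ≠ 0 := sub_ne_zero.mpr (Ne.symm (hay l hl))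
          have h0 : x l ≠ 0 := hx0' l hl
          rw [hQl l hl]
          field_simp
          ring
        rw [Finset.sum_insert ha, hQa, Finset.sum_congr rfl e2, Finset.prod_insert ha]
        simp only [Finset.sum_sub_distrib, Finset.sum_add_distrib, Finset.sum_neg_distrib,
          ← Finset.mul_sum]
        rw [hS, hT, hU, hH, mul_inv]
        ring
      · -- U component
        have e3 : ∀ l ∈ s, x l * Q x (insert a s) l
            = -Q x s l - x a * ((1 - x l ^ 2) * Q x s l / (x l - x a)) := by
          intro l hl
          have h2 : x l - x a ≠ 0 := sub_ne_zero.mpr (hay l hl)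
          have h3 : x a - x l ≠ 0 := sub_ne_zero.mpr (Ne.symm (hay l hl))
          rw [hQl l hl]
          field_simp
          ring
        rw [Finset.sum_insert ha, hQa, Finset.sum_congr rfl e3, Finset.prod_insert ha]
        simp only [Finset.sum_sub_distrib, Finset.sum_neg_distrib, ← Finset.mul_sum]
        rw [hS, hH]
        ring
    have hcard : Even (insert a s).card ↔ ¬ Even s.card := by
      rw [Finset.card_insert_of_notMem ha, Nat.even_add_one]
    by_cases hev : Even s.card
    · have h := key 1 (by simpa [hev] using hS) (by simpa [hev] using hT)
        (by simpa [hev] using hU)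
      have hie : ¬ Even (insert a s).card := fun he => hcard.mp he hev
      simpa [hie] using h
    · have h := key 0 (by simpa [hev] using hS) (by simpa [hev] using hT)
        (by simpa [hev] using hU)
      have hie : Even (insert a s).card := hcard.mpr hev
      simpa [hie] using h

end Lemma2Aux

open Lemma2Aux Finset in
/-- **Lemma 2** of the paper.  For an even positive integer `n` and nonzero pairwise
distinct `x 1, …, x n` in a field `F`,
`(x_1⋯x_n)^2 ∑_k ∑_{l≠k} x_k⁻² x_l⁻¹ ∏_{i≠k} (1-x_i x_k)/(x_i-x_k)
  ∏_{i≠k,l} (1-x_i x_l)/(x_i-x_l) = 1 - x_1⋯x_n`. -/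
theorem lemma_two (F : Type*) [Field F] (n : ℕ) (hn : 0 < n) (hneven : Even n)
    (x : Fin n → F) (hx0 : ∀ i, x i ≠ 0) (hxinj : Function.Injective x) :
    (∏ i : Fin n, x i) ^ 2 *
      ∑ k : Fin n, ∑ l ∈ Finset.univ.erase k,
        (x k)⁻¹ ^ 2 * (x l)⁻¹ *
          (∏ i ∈ Finset.univ.erase k, (1 - x i * x k) / (x i - x k)) *
          ∏ i ∈ (Finset.univ.erase k).erase l, (1 - x i * x l) / (x i - x l) =
    1 - ∏ i : Fin n, x i := by
  classical
  have hP0 : (∏ i : Fin n, x i) ≠ 0 := Finset.prod_ne_zero_iff.mpr fun i _ => hx0 i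
  have hinner : ∀ k : Fin n,
      ∑ l ∈ Finset.univ.erase k,
        (x k)⁻¹ ^ 2 * (x l)⁻¹ *
          (∏ i ∈ Finset.univ.erase k, (1 - x i * x k) / (x i - x k)) *
          ∏ i ∈ (Finset.univ.erase k).erase l, (1 - x i * x l) / (x i - x l)
      = (x k)⁻¹ * Q x Finset.univ k * (∏ i : Fin n, x i)⁻¹ := by
    intro k
    have hTk := (STU x (Finset.univ.erase k) (fun i _ => hx0 i)
      (fun i _ j _ h => hxinj h)).2.1
    have hcard : (Finset.univ.erase k).card = n - 1 := by
      simp [Finset.card_erase_of_mem]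
    have hodd : ¬ Even ((Finset.univ.erase k).card) := by
      rw [hcard]
      rw [Nat.not_even_iff_odd]
      exact Nat.Even.sub_odd hn hneven odd_one
    rw [if_neg hodd, sub_zero] at hTk
    have hprodk : (∏ i ∈ Finset.univ.erase k, x i) * x k = ∏ i : Fin n, x i :=
      Finset.prod_erase_mul _ _ (mem_univ k)
    have step : ∀ l ∈ Finset.univ.erase k,
        (x k)⁻¹ ^ 2 * (x l)⁻¹ *
          (∏ i ∈ Finset.univ.erase k, (1 - x i * x k) / (x i - x k)) *
          ∏ i ∈ (Finset.univ.erase k).erase l, (1 - x i * x l) / (x i - x l)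
        = ((x k)⁻¹ ^ 2 * Q x Finset.univ k) *
            ((x l)⁻¹ * Q x (Finset.univ.erase k) l) := by
      intro l hl
      simp only [Q]
      ring
    rw [Finset.sum_congr rfl step, ← Finset.mul_sum, hTk]
    have hek : (∏ i ∈ Finset.univ.erase k, x i) ≠ 0 :=
      Finset.prod_ne_zero_iff.mpr fun i _ => hx0 i
    have h1 : (∏ i ∈ Finset.univ.erase k, x i)⁻¹ = x k * (∏ i : Fin n, x i)⁻¹ := by
      field_simp
      linear_combination -hprodk
    rw [h1]
    have hk0 := hx0 k
    field_simp
  rw [Finset.sum_congr rfl (fun k _ => hinner k), ← Finset.sum_mul]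
  have hT := (STU x Finset.univ (fun i _ => hx0 i) (fun i _ j _ h => hxinj h)).2.1
  have hev : Even ((Finset.univ : Finset (Fin n)).card) := by
    simpa using hneven
  rw [if_pos hev] at hT
  rw [hT]
  field_simp
end

section
/- For every positive integer n and all elements x_1, …, x_n of a commutative ring, the following identity (the B_n Weyl denominator formula, with half-integer powers cleared) holds: ∑_{σ ∈ S_n} ∑_{S ⊆ {1,…,n}} (−1)^{inv(σ) + |S|} ∏_{i ∈ S} x_{σ(i)}^{2n−i} ∏_{i ∉ S} x_{σ(i)}^{i−1} = ∏_{i=1}^n (1 − x_i) · ∏_{1 ≤ i < j ≤ n} (x_i − x_j)(x_i x_j − 1). -/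
open Equiv Polynomial Finset


private lemma finRotate_mul_revPerm (n : ℕ) :
    finRotate (n+1) * (Fin.revPerm : Perm (Fin (n+1)))
      = Perm.decomposeFin.symm (0, (Fin.revPerm : Perm (Fin n))) := by
  ext i
  refine Fin.cases ?_ (fun x => ?_) i
  · simp [Fin.rev_zero, finRotate_last]
  · simp only [Perm.mul_apply, Fin.revPerm_apply, Fin.rev_succ,
      Perm.decomposeFin_symm_apply_succ, Equiv.swap_self, Equiv.refl_apply,
      finRotate_succ_apply, Fin.coeSucc_eq_succ]

private lemma sign_revPerm (n : ℕ) :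
    Perm.sign (Fin.revPerm : Perm (Fin n)) = (-1) ^ (∑ i ∈ Finset.range n, i) := by
  induction n with
  | zero =>
    have : (Fin.revPerm : Perm (Fin 0)) = 1 := Subsingleton.elim _ _
    simp [this]
  | succ n ih =>
    have h := congrArg Perm.sign (finRotate_mul_revPerm n)
    rw [map_mul, sign_finRotate, Perm.decomposeFin.symm_sign, if_pos rfl, one_mul, ih] at h
    have h2 : ((-1 : ℤˣ) ^ n) * ((-1 : ℤˣ) ^ n * Perm.sign (Fin.revPerm : Perm (Fin (n+1))))
        = ((-1 : ℤˣ) ^ n) * (-1) ^ (∑ i ∈ Finset.range n, i) := by rw [Nat.add_sub_cancel] at h; rw [h]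
    rw [← mul_assoc, ← pow_add, ← two_mul, pow_mul, neg_one_sq, one_pow, one_mul,
      ← pow_add] at h2
    rw [h2, Finset.sum_range_succ]
    ring


private lemma dickson_cast31 {R : Type*} [CommRing R] : (3 - ((1:ℕ):R[X])) = 2 := by
  push_cast; ring

private lemma natDegree_dickson_le {R : Type*} [CommRing R] (n : ℕ) :
    (dickson 1 (1:R) n).natDegree ≤ n := by
  induction n using Nat.strong_induction_on with
  | _ n ih =>
    match n with
    | 0 => rw [dickson_zero, dickson_cast31]; simp
    | 1 => rw [dickson_one]; exact natDegree_X_le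
    | (m+2) =>
      rw [dickson_add_two]
      refine le_trans (natDegree_sub_le _ _) ?_
      refine max_le ?_ ?_
      · refine le_trans (natDegree_mul_le) ?_
        have := ih (m+1) (by omega)
        have hX : (X : R[X]).natDegree ≤ 1 := natDegree_X_le
        omega
      · refine le_trans (natDegree_mul_le) ?_
        simp only [natDegree_C]
        have := ih m (by omega)
        omega

private lemma dickson_monic_deg {R : Type*} [CommRing R] [Nontrivial R] (n : ℕ) :
    (dickson 1 (1:R) (n+1)).Monic ∧ (dickson 1 (1:R) (n+1)).natDegree = n + 1 := by
  induction n using Nat.strong_induction_on with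
  | _ n ih =>
    match n with
    | 0 => simp [dickson_one, monic_X]
    | 1 =>
      rw [dickson_two, dickson_cast31]
      have hd : (C (1:R) * 2 : R[X]).natDegree = 0 := by
        refine Nat.le_zero.mp (le_trans natDegree_mul_le ?_)
        simp [natDegree_C, natDegree_ofNat]
      constructor
      · refine Monic.sub_of_left (monic_X_pow 2) ?_
        refine lt_of_le_of_lt (degree_le_of_natDegree_le (n := 0) (le_of_eq hd)) ?_
        rw [degree_X_pow]; norm_num
      · rw [natDegree_sub_eq_left_of_natDegree_lt (by rw [hd, natDegree_X_pow]; omega),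
          natDegree_X_pow]
    | (m+2) =>
      rw [show m + 2 + 1 = (m + 1) + 2 by ring, dickson_add_two]
      have hXd : (X * dickson 1 (1:R) (m+1+1)).Monic := (monic_X).mul (ih (m+1) (by omega)).1
      have hXdeg : (X * dickson 1 (1:R) (m+1+1)).natDegree = m + 3 := by
        rw [(monic_X).natDegree_mul (ih (m+1) (by omega)).1, natDegree_X,
          (ih (m+1) (by omega)).2]
        omega
      have hsmall : (C (1:R) * dickson 1 (1:R) (m+1)).natDegree < m + 3 := by
        refine lt_of_le_of_lt natDegree_mul_le ?_
        simp only [natDegree_C]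
        have := natDegree_dickson_le (R := R) (m+1)
        omega
      constructor
      · refine Monic.sub_of_left hXd ?_
        refine Polynomial.degree_lt_degree ?_
        rw [hXdeg]; exact hsmall
      · rw [natDegree_sub_eq_left_of_natDegree_lt (by rw [hXdeg]; exact hsmall), hXdeg]


private lemma sum_geom_split {R : Type*} [CommRing R] (a : R) :
    ∀ (d j : ℕ), ∑ t ∈ Finset.range (2*d+1), a^(j+t)
      = ∑ m ∈ Finset.Icc j (j+d), (if m = j+d then a^(j+d) else a^m + a^(2*(j+d)-m)) := by
  intro d
  induction d with
  | zero => intro j; simp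
  | succ d ih =>
    intro j
    have hsplit : Finset.Icc j (j+(d+1)) = insert j (Finset.Icc (j+1) (j+(d+1))) := by
      ext m; simp only [Finset.mem_Icc, Finset.mem_insert]; omega
    rw [hsplit, Finset.sum_insert (by simp)]
    have h1 : 2*(d+1)+1 = (2*d+1) + 1 + 1 := by ring
    rw [h1, Finset.sum_range_succ, Finset.sum_range_succ']
    have h2 : ∑ t ∈ Finset.range (2*d+1), a ^ (j + (t+1))
        = ∑ t ∈ Finset.range (2*d+1), a ^ ((j+1) + t) := by
      refine Finset.sum_congr rfl fun t _ => by ring_nf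
    rw [h2, ih (j+1)]
    have h3 : (j+1) + d = j + (d+1) := by ring
    rw [h3]
    have h4 : (if j = j + (d+1) then a^(j+(d+1)) else a^j + a^(2*(j+(d+1))-j))
        = a^j + a^(j + (2*d+1+1)) := by
      rw [if_neg (by omega)]
      congr 2
      omega
    rw [h4]
    ring

private lemma entry_factor {R : Type*} [CommRing R] (a : R) (j n : ℕ) (hj : j < n) :
    a^j - a^(2*n-1-j) = (1 - a) * ∑ t ∈ Finset.range (2*n-1-2*j), a^(j+t) := by
  have hm : 2*n-1-j = j + (2*n-1-2*j) := by omega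
  rw [hm, pow_add]
  have hg : (1 : R) - a^(2*n-1-2*j) = (1-a) * ∑ t ∈ Finset.range (2*n-1-2*j), a^t := by
    have := geom_sum_mul a (2*n-1-2*j)
    have h2 : (∑ i ∈ Finset.range (2*n-1-2*j), a ^ i) * (a - 1) = a^(2*n-1-2*j) - 1 := this
    linear_combination h2
  calc a^j - a^j * a^(2*n-1-2*j) = a^j * (1 - a^(2*n-1-2*j)) := by ring
    _ = a^j * ((1-a) * ∑ t ∈ Finset.range (2*n-1-2*j), a^t) := by rw [hg]
    _ = (1-a) * (a^j * ∑ t ∈ Finset.range (2*n-1-2*j), a^t) := by ring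
    _ = (1-a) * ∑ t ∈ Finset.range (2*n-1-2*j), a^j * a^t := by rw [Finset.mul_sum]
    _ = (1-a) * ∑ t ∈ Finset.range (2*n-1-2*j), a^(j+t) := by
        congr 1; exact Finset.sum_congr rfl fun t _ => (pow_add a j t).symm


private lemma prod_pairs_mul {R : Type*} [CommRing R] (n : ℕ) (x : Fin n → R) :
    (∏ i : Fin n, ∏ j ∈ Finset.Ioi i, (x i * x j)) = ∏ i : Fin n, x i ^ (n-1) := by
  have h1 : (∏ i : Fin n, ∏ j ∈ Finset.Ioi i, (x i * x j))
      = (∏ i : Fin n, ∏ j ∈ Finset.Ioi i, x i) * ∏ i : Fin n, ∏ j ∈ Finset.Ioi i, x j := by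
    rw [← Finset.prod_mul_distrib]
    exact Finset.prod_congr rfl fun i _ => Finset.prod_mul_distrib
  have h2 : (∏ i : Fin n, ∏ j ∈ Finset.Ioi i, x i) = ∏ i : Fin n, x i ^ (n - 1 - (i:ℕ)) := by
    refine Finset.prod_congr rfl fun i _ => ?_
    rw [Finset.prod_const, Fin.card_Ioi]
  have h3 : (∏ i : Fin n, ∏ j ∈ Finset.Ioi i, x j) = ∏ j : Fin n, x j ^ (j:ℕ) := by
    rw [Finset.prod_comm' (t' := Finset.univ) (s' := fun j => Finset.Iio j)
      (by intro i j; simp [Finset.mem_Ioi, Finset.mem_Iio])]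
    refine Finset.prod_congr rfl fun j _ => ?_
    rw [Finset.prod_const, Fin.card_Iio]
  rw [h1, h2, h3, ← Finset.prod_mul_distrib]
  refine Finset.prod_congr rfl fun i _ => ?_
  rw [← pow_add]
  congr 1
  have := i.isLt
  omega

private lemma key_field (n : ℕ) (K : Type*) [Field K] (x : Fin n → K) (hx : ∀ i, x i ≠ 0) :
    ∑ σ : Equiv.Perm (Fin n), ∑ S : Finset (Fin n),
      ((Equiv.Perm.sign σ : ℤ) : K) * (-1) ^ S.card *
        ((∏ i ∈ S, x (σ i) ^ (2 * n - 1 - (i : ℕ))) *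
          ∏ i ∈ Sᶜ, x (σ i) ^ (i : ℕ)) =
    (∏ i : Fin n, (1 - x i)) *
      ∏ i : Fin n, ∏ j ∈ Finset.Ioi i, ((x i - x j) * (x i * x j - 1)) := by
  classical
  set y : Fin n → K := fun i => x i + (x i)⁻¹ with hy
  set p : Fin n → K[X] := fun k => if (k:ℕ) = 0 then 1 else dickson 1 1 (k:ℕ) with hp
  have hpdeg : ∀ k : Fin n, (p k).natDegree = (k:ℕ) := by
    intro k
    by_cases hk : (k:ℕ) = 0
    · simp [hp, hk]
    · obtain ⟨m, hm⟩ := Nat.exists_eq_succ_of_ne_zero hk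
      simp only [hp, hm, if_neg (by omega : ¬ (m+1 = 0))]
      exact (dickson_monic_deg m).2
  have hpmon : ∀ k : Fin n, (p k).Monic := by
    intro k
    by_cases hk : (k:ℕ) = 0
    · simp [hp, hk, monic_one]
    · obtain ⟨m, hm⟩ := Nat.exists_eq_succ_of_ne_zero hk
      simp only [hp, hm, if_neg (by omega : ¬ (m+1 = 0))]
      exact (dickson_monic_deg m).1
  set A : Matrix (Fin n) (Fin n) K :=
    Matrix.of fun i j => x i ^ (j:ℕ) - x i ^ (2*n-1-(j:ℕ)) with hA
  set B : Matrix (Fin n) (Fin n) K :=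
    Matrix.of fun i j => ∑ t ∈ Finset.range (2*n-1-2*(j:ℕ)), x i ^ ((j:ℕ)+t) with hB
  set C : Matrix (Fin n) (Fin n) K :=
    Matrix.of fun i m => if (m:ℕ) = n-1 then x i^(n-1) else x i^(m:ℕ) + x i^(2*n-2-(m:ℕ))
    with hC
  set T : Matrix (Fin n) (Fin n) K :=
    Matrix.of fun m j => if (j:ℕ) ≤ (m:ℕ) then (1:K) else 0 with hT
  set D : Matrix (Fin n) (Fin n) K := Matrix.of fun i k => (p k).eval (y i) with hD
  -- Step 1 : LHS = det A
  have step1 : (∑ σ : Equiv.Perm (Fin n), ∑ S : Finset (Fin n),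
      ((Equiv.Perm.sign σ : ℤ) : K) * (-1) ^ S.card *
        ((∏ i ∈ S, x (σ i) ^ (2 * n - 1 - (i : ℕ))) *
          ∏ i ∈ Sᶜ, x (σ i) ^ (i : ℕ))) = A.det := by
    rw [Matrix.det_apply']
    refine Finset.sum_congr rfl fun σ _ => ?_
    have hprod : (∏ i, A (σ i) i)
        = ∑ S : Finset (Fin n), (-1 : K)^S.card *
            ((∏ i ∈ S, x (σ i) ^ (2*n-1-(i:ℕ))) * ∏ i ∈ Sᶜ, x (σ i)^(i:ℕ)) := by
      have h1 : (∏ i, A (σ i) i)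
          = ∏ i, ((-(x (σ i) ^ (2*n-1-(i:ℕ)))) + x (σ i)^(i:ℕ)) :=
        Finset.prod_congr rfl fun i _ => by simp [hA, Matrix.of_apply]; ring
      rw [h1, Finset.prod_add, Finset.powerset_univ]
      refine Finset.sum_congr rfl fun S _ => ?_
      rw [← Finset.compl_eq_univ_sdiff]
      have h2 : (∏ i ∈ S, (-(x (σ i) ^ (2*n-1-(i:ℕ)))))
          = (-1:K)^S.card * ∏ i ∈ S, x (σ i) ^ (2*n-1-(i:ℕ)) := by
        rw [Finset.prod_congr rfl fun i _ => (neg_one_mul (x (σ i) ^ (2*n-1-(i:ℕ)))).symm,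
          Finset.prod_mul_distrib, Finset.prod_const]
      rw [h2]; ring
    rw [hprod, Finset.mul_sum]
    exact Finset.sum_congr rfl fun S _ => by ring
  -- Step 2 : A = diag (1 - x) * B
  have step2 : A = Matrix.diagonal (fun i => 1 - x i) * B := by
    ext i j
    rw [Matrix.diagonal_mul]
    exact entry_factor (x i) (j:ℕ) n j.isLt
  -- Step 3 : B = C * T
  have step3 : B = C * T := by
    ext i j
    rw [Matrix.mul_apply]
    have hj : (j:ℕ) < n := j.isLt
    have hd : 2*n-1-2*(j:ℕ) = 2*(n-1-(j:ℕ))+1 := by omega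
    have hjd : (j:ℕ) + (n-1-(j:ℕ)) = n-1 := by omega
    have lhs_eq := sum_geom_split (x i) (n-1-(j:ℕ)) (j:ℕ)
    rw [hjd] at lhs_eq
    show (∑ t ∈ Finset.range (2*n-1-2*(j:ℕ)), x i ^ ((j:ℕ)+t)) = _
    rw [hd, lhs_eq]
    have rhs_eq : (∑ m : Fin n, C i m * T m j)
        = ∑ m ∈ Finset.range n, (if (j:ℕ) ≤ m then
            (if m = n-1 then x i^(n-1) else x i^m + x i^(2*n-2-m)) else 0) := by
      rw [← Fin.sum_univ_eq_sum_range]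
      refine Finset.sum_congr rfl fun m _ => ?_
      simp only [hC, hT, Matrix.of_apply]
      by_cases h : (j:ℕ) ≤ (m:ℕ)
      · rw [if_pos h, if_pos h, mul_one]
      · rw [if_neg h, if_neg h, mul_zero]
    have hf : Finset.filter (fun m => (j:ℕ) ≤ m) (Finset.range n)
        = Finset.Icc (j:ℕ) (n-1) := by
      ext m
      simp only [Finset.mem_filter, Finset.mem_range, Finset.mem_Icc]
      omega
    rw [rhs_eq, ← Finset.sum_filter, hf]
    refine (Finset.sum_congr rfl fun m hm => ?_)
    rw [Finset.mem_Icc] at hm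
    by_cases h : m = n-1
    · rw [if_pos h, if_pos h]
    · rw [if_neg h, if_neg h]
      congr 2
      omega
  -- det T = 1
  have hdetT : T.det = 1 := by
    have htri : T.BlockTriangular OrderDual.toDual := by
      intro a b hab
      simp only [hT, Matrix.of_apply]
      rw [if_neg]
      have : (a : ℕ) < (b : ℕ) := hab
      omega
    rw [Matrix.det_of_lowerTriangular T htri]
    simp [hT]
  -- Step 4 : C = diag (x^{n-1}) * D.submatrix id revPerm
  have step4 : C = Matrix.diagonal (fun i => x i ^ (n-1))
      * (D.submatrix id (Fin.revPerm : Equiv.Perm (Fin n))) := by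
    ext i m
    rw [Matrix.diagonal_mul]
    simp only [Matrix.submatrix_apply, id_eq, Fin.revPerm_apply, hD, Matrix.of_apply, hC]
    have hrev : ((m.rev : Fin n) : ℕ) = n - 1 - (m:ℕ) := by
      rw [Fin.val_rev]; omega
    have hmlt := m.isLt
    by_cases hm : (m:ℕ) = n-1
    · have hprev : p m.rev = 1 := by
        simp only [hp]
        rw [hrev, if_pos (by omega : n-1-(m:ℕ) = 0)]
      rw [if_pos hm, hprev, Polynomial.eval_one, mul_one]
    · have hprev : p m.rev = dickson 1 1 (n-1-(m:ℕ)) := by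
        simp only [hp]
        rw [hrev, if_neg (by omega : ¬ (n-1-(m:ℕ) = 0))]
      rw [if_neg hm, hprev]
      show _ = x i ^ (n-1) * Polynomial.eval (x i + (x i)⁻¹) _
      rw [dickson_one_one_eval_add_inv (x i) (x i)⁻¹ (mul_inv_cancel₀ (hx i))]
      have hA1 : x i^(n-1) * (x i)^(n-1-(m:ℕ)) = x i^(2*n-2-(m:ℕ)) := by
        rw [← pow_add]; congr 1; omega
      have hA2 : x i^(n-1) * ((x i)⁻¹)^(n-1-(m:ℕ)) = x i^(m:ℕ) := by
        rw [inv_pow, ← pow_sub₀ _ (hx i) (by omega : n-1-(m:ℕ) ≤ n-1)]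
        congr 1
        omega
      rw [mul_add, hA1, hA2, add_comm]
  -- Step 5 : det D = vandermonde y
  have step5 : D.det = ∏ i : Fin n, ∏ j ∈ Finset.Ioi i, (y j - y i) := by
    rw [hD, ← Matrix.det_eval_matrixOfPolynomials_eq_det_vandermonde y p hpdeg hpmon,
      Matrix.det_vandermonde]
  -- final assembly
  rw [step1, step2, Matrix.det_mul, Matrix.det_diagonal, step3, Matrix.det_mul, hdetT,
    mul_one, step4, Matrix.det_mul, Matrix.det_diagonal, Matrix.det_permute', step5]
  congr 1
  set N : ℕ := ∑ i ∈ Finset.range n, i with hN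
  have hsign : (((Equiv.Perm.sign (Fin.revPerm : Equiv.Perm (Fin n)) : ℤˣ) : ℤ) : K)
      = (-1 : K)^N := by
    rw [sign_revPerm]
    push_cast
    ring
  have hfac : ∀ i : Fin n, ∀ j ∈ Finset.Ioi i,
      y j - y i = (-1 : K) * ((x i - x j) * (x i * x j - 1)) * ((x i * x j)⁻¹) := by
    intro i j _
    have hi := hx i
    have hj := hx j
    simp only [hy]
    field_simp
    ring
  have hprod : (∏ i : Fin n, ∏ j ∈ Finset.Ioi i, (y j - y i))
      = (-1:K)^N * ((∏ i : Fin n, ∏ j ∈ Finset.Ioi i, ((x i - x j) * (x i * x j - 1)))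
          * (∏ i : Fin n, x i ^ (n-1))⁻¹) := by
    have e1 : (∏ i : Fin n, ∏ j ∈ Finset.Ioi i,
          ((-1:K) * ((x i - x j) * (x i * x j - 1)) * (x i * x j)⁻¹))
        = ((∏ i : Fin n, ∏ j ∈ Finset.Ioi i, (-1:K))
            * (∏ i : Fin n, ∏ j ∈ Finset.Ioi i, ((x i - x j) * (x i * x j - 1))))
          * (∏ i : Fin n, ∏ j ∈ Finset.Ioi i, (x i * x j)⁻¹) := by
      rw [← Finset.prod_mul_distrib, ← Finset.prod_mul_distrib]
      refine Finset.prod_congr rfl fun i _ => ?_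
      rw [← Finset.prod_mul_distrib, ← Finset.prod_mul_distrib]
    have ec : (∏ i : Fin n, ∏ j ∈ Finset.Ioi i, (-1:K)) = (-1:K)^N := by
      rw [Finset.prod_congr rfl fun i (_ : i ∈ Finset.univ) =>
        Finset.prod_const (b := (-1:K)) (s := Finset.Ioi i), Finset.prod_pow_eq_pow_sum]
      congr 1
      have h1 : ∀ i : Fin n, (Finset.Ioi i).card = n - 1 - (i:ℕ) := fun i => Fin.card_Ioi i
      rw [Finset.sum_congr rfl fun i _ => h1 i, Fin.sum_univ_eq_sum_range (fun i => n-1-i) n,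
        hN]
      exact Finset.sum_range_reflect (fun i => i) n
    have ei : (∏ i : Fin n, ∏ j ∈ Finset.Ioi i, (x i * x j)⁻¹)
        = (∏ i : Fin n, x i ^ (n-1))⁻¹ := by
      rw [Finset.prod_congr rfl fun i (_ : i ∈ Finset.univ) =>
        (Finset.prod_inv_distrib (f := fun j => x i * x j) (s := Finset.Ioi i))]
      rw [Finset.prod_inv_distrib, prod_pairs_mul]
    rw [Finset.prod_congr rfl fun i _ => Finset.prod_congr rfl (hfac i), e1, ec, ei]
    ring
  rw [hsign, hprod]
  have hnz : (∏ i : Fin n, x i ^ (n-1)) ≠ 0 :=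
    Finset.prod_ne_zero_iff.mpr fun i _ => pow_ne_zero _ (hx i)
  have h1 : ((-1:K)^N) * ((-1:K)^N) = 1 := by
    rw [← pow_add, Even.neg_one_pow ⟨N, rfl⟩]
  have h2 : (∏ i : Fin n, x i ^ (n-1)) * (∏ i : Fin n, x i ^ (n-1))⁻¹ = 1 :=
    mul_inv_cancel₀ hnz
  calc (∏ i : Fin n, x i ^ (n-1)) * ((-1:K)^N *
        ((-1:K)^N * ((∏ i : Fin n, ∏ j ∈ Finset.Ioi i, ((x i - x j) * (x i * x j - 1)))
          * (∏ i : Fin n, x i ^ (n-1))⁻¹)))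
      = (((-1:K)^N) * ((-1:K)^N)) * (((∏ i : Fin n, x i ^ (n-1))
          * (∏ i : Fin n, x i ^ (n-1))⁻¹))
          * (∏ i : Fin n, ∏ j ∈ Finset.Ioi i, ((x i - x j) * (x i * x j - 1))) := by ring
    _ = ∏ i : Fin n, ∏ j ∈ Finset.Ioi i, ((x i - x j) * (x i * x j - 1)) := by
        rw [h1, h2, one_mul, one_mul]

private lemma map_lhs {R S₂ F : Type*} [CommRing R] [CommRing S₂] [FunLike F R S₂]
    [RingHomClass F R S₂] (f : F) (n : ℕ)
    (x : Fin n → R) :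
    f (∑ σ : Equiv.Perm (Fin n), ∑ S : Finset (Fin n),
      ((Equiv.Perm.sign σ : ℤ) : R) * (-1) ^ S.card *
        ((∏ i ∈ S, x (σ i) ^ (2 * n - 1 - (i : ℕ))) *
          ∏ i ∈ Sᶜ, x (σ i) ^ (i : ℕ))) =
    ∑ σ : Equiv.Perm (Fin n), ∑ S : Finset (Fin n),
      ((Equiv.Perm.sign σ : ℤ) : S₂) * (-1) ^ S.card *
        ((∏ i ∈ S, f (x (σ i)) ^ (2 * n - 1 - (i : ℕ))) *
          ∏ i ∈ Sᶜ, f (x (σ i)) ^ (i : ℕ)) := by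
  simp only [map_sum, map_mul, map_prod, map_pow, map_intCast, map_neg, map_one]

private lemma map_rhs {R S₂ F : Type*} [CommRing R] [CommRing S₂] [FunLike F R S₂]
    [RingHomClass F R S₂] (f : F) (n : ℕ)
    (x : Fin n → R) :
    f ((∏ i : Fin n, (1 - x i)) *
      ∏ i : Fin n, ∏ j ∈ Finset.Ioi i, ((x i - x j) * (x i * x j - 1))) =
    (∏ i : Fin n, (1 - f (x i))) *
      ∏ i : Fin n, ∏ j ∈ Finset.Ioi i, ((f (x i) - f (x j)) * (f (x i) * f (x j) - 1)) := by
  simp only [map_mul, map_prod, map_sub, map_one]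

/-- The **B_n Weyl denominator formula** with half-integer powers cleared.
With 0-indexed `i`, the exponent `2n - i` (for `1 ≤ i ≤ n`) becomes `2n - 1 - i` and
`i - 1` becomes `i`; `(-1)^{inv σ}` is the sign of the permutation `σ`. -/
theorem weyl_denominator_Bn (n : ℕ) (hn : 0 < n) (R : Type*) [CommRing R]
    (x : Fin n → R) :
    ∑ σ : Equiv.Perm (Fin n), ∑ S : Finset (Fin n),
      ((Equiv.Perm.sign σ : ℤ) : R) * (-1) ^ S.card *
        ((∏ i ∈ S, x (σ i) ^ (2 * n - 1 - (i : ℕ))) *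
          ∏ i ∈ Sᶜ, x (σ i) ^ (i : ℕ)) =
    (∏ i : Fin n, (1 - x i)) *
      ∏ i : Fin n, ∏ j ∈ Finset.Ioi i, ((x i - x j) * (x i * x j - 1)) := by
  classical
  set P := MvPolynomial (Fin n) ℤ with hP
  let K := FractionRing P
  have hinj : Function.Injective (algebraMap P K) := IsFractionRing.injective P K
  have hx0 : ∀ i : Fin n, algebraMap P K (MvPolynomial.X i) ≠ 0 := fun i =>
    (map_ne_zero_iff _ hinj).mpr (MvPolynomial.X_ne_zero i)
  have hpoly : ∑ σ : Equiv.Perm (Fin n), ∑ S : Finset (Fin n),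
      ((Equiv.Perm.sign σ : ℤ) : P) * (-1) ^ S.card *
        ((∏ i ∈ S, (MvPolynomial.X (σ i) : P) ^ (2 * n - 1 - (i : ℕ))) *
          ∏ i ∈ Sᶜ, (MvPolynomial.X (σ i) : P) ^ (i : ℕ)) =
      (∏ i : Fin n, (1 - (MvPolynomial.X i : P))) *
        ∏ i : Fin n, ∏ j ∈ Finset.Ioi i,
          (((MvPolynomial.X i : P) - MvPolynomial.X j) *
            ((MvPolynomial.X i : P) * MvPolynomial.X j - 1)) := by
    apply hinj
    rw [map_lhs (algebraMap P K) n MvPolynomial.X, map_rhs (algebraMap P K) n MvPolynomial.X]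
    exact key_field n K (fun i => algebraMap P K (MvPolynomial.X i)) hx0
  have h2 := congrArg (fun q : P => MvPolynomial.aeval x q) hpoly
  rw [map_lhs (MvPolynomial.aeval x (R := ℤ)) n MvPolynomial.X,
    map_rhs (MvPolynomial.aeval x (R := ℤ)) n MvPolynomial.X] at h2
  simpa only [MvPolynomial.aeval_X] using h2
end

section
/- For every positive integer n and all elements x_1, …, x_n of a commutative ring, the following identity holds: 2 · ∑_{σ ∈ S_n} ∑_{S ⊆ {1,…,n}, |S| even} (−1)^{inv(σ)} ∏_{i ∈ S} x_{σ(i)}^{2n−i} ∏_{i ∉ S} x_{σ(i)}^{i−1} = ( ∏_{i=1}^n (1 − x_i) + ∏_{i=1}^n (1 + x_i) ) · ∏_{1 ≤ i < j ≤ n} (x_i − x_j)(x_i x_j − 1). -/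
/-!
For a fixed permutation, summing over even subsets keeps exactly half of
`∏ (b + a) + ∏ (b - a)`, so the left side is `det M₋₁ + det M₁`, where
`M_c = (x_j ^ i - c x_j ^ (2n-1-i))`. Row `j` of `M_c` has the factor `1 - c x_j`; what remains
in column `i` is `x_j ^ i ∑_{k ≤ 2(n-1-i)} (c x_j) ^ k`, a palindromic polynomial which, as
`c² = 1`, is the homogenization at `(1 + x_j², x_j)` of a monic polynomial of degree `n - 1 - i`
in `x_j + x_j⁻¹`. Hence the remaining matrix is the projective Vandermonde matrix of
`(x_j, 1 + x_j²)` times a unitriangular matrix, and its determinant is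
`∏_{i<j} (x_j (1 + x_i²) - x_i (1 + x_j²)) = ∏_{i<j} (x_i - x_j)(x_i x_j - 1)`.
No division is needed, so the argument works over any commutative ring.
-/

section GeomFold

open Polynomial

variable {A : Type*} [Ring A] (c : A)

/-- When `c * c = 1`, `x ^ m * (geomFold c m).eval (x + x⁻¹) = ∑ k ∈ range (2 * m + 1), (c * x) ^ k`,
stated without division as `eval_homogenize_geomFold`. -/
noncomputable def geomFold : ℕ → A[X]
  | 0 => 1
  | 1 => X + C c
  | m + 2 => X * geomFold (m + 1) - geomFold m

theorem natDegree_geomFold_le : ∀ m, (geomFold c m).natDegree ≤ m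
  | 0 => by simp [geomFold]
  | 1 => by simp [geomFold, natDegree_X_le]
  | m + 2 => by
    rw [geomFold]
    refine (natDegree_sub_le _ _).trans
      (max_le ?_ ((natDegree_geomFold_le m).trans (Nat.le_add_right m 2)))
    exact (natDegree_mul_le_of_le natDegree_X_le (natDegree_geomFold_le (m + 1))).trans_eq
      (by ring)

theorem coeff_geomFold_self : ∀ m, (geomFold c m).coeff m = 1
  | 0 => by simp [geomFold]
  | 1 => by simp [geomFold]
  | m + 2 => by
    rw [geomFold, coeff_sub, coeff_X_mul, coeff_geomFold_self (m + 1),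
      coeff_eq_zero_of_natDegree_lt ((natDegree_geomFold_le c m).trans_lt (by omega)), sub_zero]

end GeomFold

section Homogenize

open Polynomial Finset

section CommSemiring

variable {A : Type*} [CommSemiring A]

theorem eval_homogenize_eq_sum (p : A[X]) (d : ℕ) (a b : A) :
    MvPolynomial.eval ![a, b] (p.homogenize d) =
      ∑ k ∈ range (d + 1), p.coeff k * a ^ k * b ^ (d - k) := by
  simp only [homogenize, MvPolynomial.eval_sum, Nat.sum_antidiagonal_eq_sum_range_succ_mk,
    MvPolynomial.eval_monomial]
  refine sum_congr rfl fun k _ => ?_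
  simp [Finsupp.prod_fintype, Fin.prod_univ_two, mul_assoc]

theorem homogenize_add_of_natDegree_le {p : A[X]} {m : ℕ} (hp : p.natDegree ≤ m) (k : ℕ) :
    p.homogenize (m + k) = p.homogenize m * MvPolynomial.X 1 ^ k := by
  simpa using homogenize_mul p 1 hp (natDegree_one.trans_le k.zero_le)

end CommSemiring

variable {A : Type*} [CommRing A]

theorem eval_homogenize_geomFold {c : A} (hc : c * c = 1) (x : A) : ∀ m,
    MvPolynomial.eval ![1 + x ^ 2, x] ((geomFold c m).homogenize m) =
      ∑ k ∈ range (2 * m + 1), (c * x) ^ k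
  | 0 => by simp [geomFold]
  | 1 => by
    simp only [geomFold, homogenize_add, homogenize_X one_ne_zero, tsub_self, pow_zero, mul_one,
      homogenize_C, pow_one, map_add, map_mul, MvPolynomial.eval_X, MvPolynomial.eval_C,
      Matrix.cons_val_zero, Matrix.cons_val_one, Matrix.cons_val_fin_one, sum_range_succ, range_one,
      sum_singleton]
    linear_combination -x ^ 2 * hc
  | m + 2 => by
    have hX : (X * geomFold c (m + 1)).homogenize (m + 2) =
        MvPolynomial.X 0 * (geomFold c (m + 1)).homogenize (m + 1) := by
      have := homogenize_mul X (geomFold c (m + 1)) natDegree_X_le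
        (natDegree_geomFold_le c (m + 1))
      rwa [homogenize_X one_ne_zero, Nat.sub_self, pow_zero, mul_one, add_comm 1,
        add_assoc] at this
    have step (k : ℕ) : ∑ i ∈ range (2 * (k + 1) + 1), (c * x) ^ i =
        ∑ i ∈ range (2 * k + 1), (c * x) ^ i + (c * x) ^ (2 * k + 1) + (c * x) ^ (2 * k + 2) := by
      simp [sum_range_succ, mul_add, add_assoc]
    rw [geomFold, homogenize_sub, hX,
      homogenize_add_of_natDegree_le (natDegree_geomFold_le c m) 2]
    simp only [map_sub, map_mul, map_pow, MvPolynomial.eval_X,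
      eval_homogenize_geomFold hc x (m + 1), eval_homogenize_geomFold hc x m]
    rw [step (m + 1), step m]
    simp only [Matrix.cons_val_zero, Matrix.cons_val_one, Matrix.cons_val_fin_one]
    linear_combination (-x ^ 2 * ((c * x) ^ (2 * m + 1) + (c * x) ^ (2 * m + 2))) * hc

end Homogenize

section Determinant

open Polynomial Finset Matrix

variable {R : Type*} [CommRing R]

theorem two_mul_sum_even_card_prod_mul_prod_compl {ι : Type*} [Fintype ι] [DecidableEq ι]
    (a b : ι → R) :
    2 * ∑ S ∈ univ.filter (fun S : Finset ι => Even S.card), (∏ i ∈ S, a i) * ∏ i ∈ Sᶜ, b i =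
      ∏ i, (b i + a i) + ∏ i, (b i - a i) := by
  simp_rw [add_comm (b _), sub_eq_neg_add, Fintype.prod_add, prod_neg, ← sum_add_distrib,
    mul_sum, sum_filter]
  refine sum_congr rfl fun S _ => ?_
  rcases Nat.even_or_odd S.card with h | h
  · rw [if_pos h, h.neg_one_pow]; ring
  · rw [if_neg (Nat.not_even_iff_odd.mpr h), h.neg_one_pow]; ring

variable {n : ℕ}

def bnAlternantMatrix (c : R) (x : Fin n → R) : Matrix (Fin n) (Fin n) R :=
  of fun j i => x j ^ (i : ℕ) - c * x j ^ (2 * n - 1 - i)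

theorem two_mul_sum_even_eq_det_add_det (x : Fin n → R) :
    2 * ∑ σ : Equiv.Perm (Fin n),
        ∑ S ∈ univ.filter (fun S : Finset (Fin n) => Even S.card),
          ((Equiv.Perm.sign σ : ℤ) : R) *
            ((∏ i ∈ S, x (σ i) ^ (2 * n - 1 - (i : ℕ))) * ∏ i ∈ Sᶜ, x (σ i) ^ (i : ℕ)) =
      (bnAlternantMatrix (-1) x).det + (bnAlternantMatrix 1 x).det := by
  simp only [det_apply', bnAlternantMatrix, of_apply, neg_one_mul, sub_neg_eq_add, one_mul,
    ← sum_add_distrib]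
  rw [mul_sum]
  refine sum_congr rfl fun σ _ => ?_
  rw [← mul_sum, mul_left_comm, two_mul_sum_even_card_prod_mul_prod_compl, mul_add]

theorem sum_pow_mul_coeff_geomFold {c : R} (hc : c * c = 1) (x : R) (i : Fin n) :
    ∑ k : Fin n, x ^ (k : ℕ) * (1 + x ^ 2) ^ (k.rev : ℕ) * (geomFold c i.rev).coeff k.rev =
      x ^ (i : ℕ) * ∑ l ∈ range (2 * i.rev + 1), (c * x) ^ l := by
  set p := geomFold c i.rev
  set d := (i.rev : ℕ) + i
  have hd : d + 1 = n := by simp only [d, Fin.val_rev]; omega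
  calc ∑ k : Fin n, x ^ (k : ℕ) * (1 + x ^ 2) ^ (k.rev : ℕ) * p.coeff k.rev
      = ∑ l : Fin n, p.coeff l * (1 + x ^ 2) ^ (l : ℕ) * x ^ (d - l) := by
        refine Fintype.sum_equiv Fin.revPerm _ _ fun k => ?_
        rw [Fin.revPerm_apply, show d - k.rev = k by simp only [d, Fin.val_rev]; omega]
        ring
    _ = ∑ l ∈ range (d + 1), p.coeff l * (1 + x ^ 2) ^ l * x ^ (d - l) := by
        rw [hd, Fin.sum_univ_eq_sum_range (fun l => p.coeff l * (1 + x ^ 2) ^ l * x ^ (d - l))]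
    _ = MvPolynomial.eval ![1 + x ^ 2, x] (p.homogenize d) := (eval_homogenize_eq_sum p d _ _).symm
    _ = x ^ (i : ℕ) * ∑ l ∈ range (2 * i.rev + 1), (c * x) ^ l := by
        rw [homogenize_add_of_natDegree_le (natDegree_geomFold_le c _), map_mul, map_pow,
          MvPolynomial.eval_X, eval_homogenize_geomFold hc]
        simp [mul_comm]

theorem bnAlternantMatrix_eq_projVandermonde_mul {c : R} (hc : c * c = 1) (x : Fin n → R) :
    bnAlternantMatrix c x = of fun j i => (1 - c * x j) *
      (projVandermonde x (fun j => 1 + x j ^ 2) *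
        of fun k i : Fin n => (geomFold c i.rev).coeff k.rev) j i := by
  ext j i
  simp only [bnAlternantMatrix, of_apply, mul_apply, projVandermonde_apply,
    sum_pow_mul_coeff_geomFold hc, mul_left_comm (1 - c * x j), mul_neg_geom_sum]
  have hc_pow : c ^ (2 * (i.rev : ℕ) + 1) = c := by
    rw [pow_succ, pow_mul, sq, hc, one_pow, one_mul]
  have hexp : (i : ℕ) + (2 * i.rev + 1) = 2 * n - 1 - i := by rw [Fin.val_rev]; omega
  rw [mul_pow, hc_pow, mul_sub, mul_one, mul_left_comm, ← pow_add, hexp]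

theorem det_bnAlternantMatrix {c : R} (hc : c * c = 1) (x : Fin n → R) :
    (bnAlternantMatrix c x).det =
      (∏ j, (1 - c * x j)) * ∏ i, ∏ j ∈ Ioi i, ((x i - x j) * (x i * x j - 1)) := by
  have hlower : (of fun k i : Fin n => (geomFold c i.rev).coeff k.rev).IsLowerTriangular :=
    fun k i hik => coeff_eq_zero_of_natDegree_lt <|
      (natDegree_geomFold_le c _).trans_lt (Fin.rev_lt_rev.mpr hik)
  rw [bnAlternantMatrix_eq_projVandermonde_mul hc, det_mul_column, det_mul, det_projVandermonde,
    det_of_isLowerTriangular _ hlower]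
  simp only [of_apply, coeff_geomFold_self, prod_const_one, mul_one]
  congr 1
  exact prod_congr rfl fun i _ => prod_congr rfl fun j _ => by ring

end Determinant

/-- With `i` 0-indexed, the paper's exponents `2n - i` and `i - 1` become `2n - 1 - i` and `i`;
`(-1)^{inv σ}` is `sign σ`. -/
theorem weyl_denominator_Bn_even_subsets_general (n : ℕ) (R : Type*) [CommRing R]
    (x : Fin n → R) :
    2 * ∑ σ : Equiv.Perm (Fin n),
        ∑ S ∈ Finset.univ.filter (fun S : Finset (Fin n) => Even S.card),
          ((Equiv.Perm.sign σ : ℤ) : R) *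
            ((∏ i ∈ S, x (σ i) ^ (2 * n - 1 - (i : ℕ))) *
              ∏ i ∈ Sᶜ, x (σ i) ^ (i : ℕ)) =
    ((∏ i : Fin n, (1 - x i)) + ∏ i : Fin n, (1 + x i)) *
      ∏ i : Fin n, ∏ j ∈ Finset.Ioi i, ((x i - x j) * (x i * x j - 1)) := by
  rw [two_mul_sum_even_eq_det_add_det, det_bnAlternantMatrix (by norm_num),
    det_bnAlternantMatrix (by norm_num)]
  simp only [neg_one_mul, sub_neg_eq_add, one_mul]
  ring

/-- Equation (4.1) of the paper: the restriction of the `B_n` Weyl denominator formula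
to subsets of even cardinality, multiplied through by `2 ∏ x_i^{(2n-1)/2}` to clear
half-integer powers.  With 0-indexed `i`, the exponent `2n - i` becomes `2n - 1 - i`
and `i - 1` becomes `i`; `(-1)^{inv σ}` is the sign of the permutation `σ`. -/
theorem weyl_denominator_Bn_even_subsets (n : ℕ) (hn : 0 < n) (R : Type*) [CommRing R]
    (x : Fin n → R) :
    2 * ∑ σ : Equiv.Perm (Fin n),
        ∑ S ∈ Finset.univ.filter (fun S : Finset (Fin n) => Even S.card),
          ((Equiv.Perm.sign σ : ℤ) : R) *
            ((∏ i ∈ S, x (σ i) ^ (2 * n - 1 - (i : ℕ))) *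
              ∏ i ∈ Sᶜ, x (σ i) ^ (i : ℕ)) =
    ((∏ i : Fin n, (1 - x i)) + ∏ i : Fin n, (1 + x i)) *
      ∏ i : Fin n, ∏ j ∈ Finset.Ioi i, ((x i - x j) * (x i * x j - 1)) :=
  weyl_denominator_Bn_even_subsets_general n R x
end

section
/- For every integer n ≥ 2, every nonnegative integer m, and all elements x_1, …, x_n of a commutative ring, ∑_{σ ∈ S_n} ∑_{S ⊆ {1,…,n}, |S| even} (−1)^{inv(σ)} ∏_{i ∈ S} x_i^{m+2n−σ(i)−1} ∏_{i ∉ S} x_i^{m+σ(i)} = 0. -/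
/-! With `a = σ⁻¹ p` and `b = σ⁻¹ q`, the map `(σ, S) ↦ (swap p q * σ, S ∆ {a, b})` is a
fixed-point-free involution on pairs with `|S|` even. It flips the sign of `σ`, and it keeps the
monomial as soon as the exponent rules `f` (inside `S`) and `g` (outside `S`) satisfy
`f · p = g · q` and `f · q = g · p`. For the theorem take `p = n - 1`, `q = n - 2`: then
`m + 2n - 2 - (n - 1) = m + 1 + (n - 2)` and `m + 2n - 2 - (n - 2) = m + 1 + (n - 1)`. -/

open Finset Equiv
open scoped symmDiff

theorem Finset.card_symmDiff_add_two_mul_card_inter {α : Type*} [DecidableEq α]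
    (s t : Finset α) : #(s ∆ t) + 2 * #(s ∩ t) = #s + #t := by
  rw [Finset.symmDiff_def, card_union_of_disjoint disjoint_sdiff_sdiff]
  have hs := card_sdiff_add_card_inter s t
  have ht := card_sdiff_add_card_inter t s
  rw [inter_comm] at ht
  omega

theorem Finset.even_card_symmDiff_iff {α : Type*} [DecidableEq α] {s t : Finset α}
    (ht : Even #t) : Even #(s ∆ t) ↔ Even #s := by
  have h := card_symmDiff_add_two_mul_card_inter s t
  simp only [Nat.even_iff] at ht ⊢
  omega

theorem Finset.prod_mul_prod_compl_eq_prod_ite {ι M : Type*} [Fintype ι] [DecidableEq ι]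
    [CommMonoid M] (s : Finset ι) (f g : ι → M) :
    (∏ i ∈ s, f i) * ∏ i ∈ sᶜ, g i = ∏ i, if i ∈ s then f i else g i := by
  rw [prod_ite, filter_mem_eq_inter, univ_inter, filter_not, filter_mem_eq_inter, univ_inter,
    compl_eq_univ_sdiff]

theorem ite_mem_symmDiff_swap_mul_apply {ι R : Type*} [DecidableEq ι] (f g : ι → ι → R)
    {p q : ι} (hp : ∀ i, f i p = g i q) (hq : ∀ i, f i q = g i p) (σ : Perm ι) (S : Finset ι)
    (i : ι) :
    (if i ∈ S ∆ {σ⁻¹ p, σ⁻¹ q} then f i ((swap p q * σ) i) else g i ((swap p q * σ) i)) =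
      if i ∈ S then f i (σ i) else g i (σ i) := by
  have hmem : i ∈ S ∆ {σ⁻¹ p, σ⁻¹ q} ↔ (i ∈ S ↔ σ i ≠ p ∧ σ i ≠ q) := by
    rw [mem_symmDiff, mem_insert, mem_singleton, Perm.eq_inv_iff_eq, Perm.eq_inv_iff_eq]
    tauto
  rw [if_congr hmem rfl rfl, Perm.mul_apply]
  by_cases hip : σ i = p
  · by_cases hS : i ∈ S <;> simp [hS, hip, hp, hq]
  by_cases hiq : σ i = q
  · by_cases hS : i ∈ S <;> simp [hS, hiq, hp, hq]
  simp [hip, hiq, swap_apply_of_ne_of_ne hip hiq]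

theorem sum_sign_mul_prod_mul_prod_compl_eq_zero {ι R : Type*} [Fintype ι] [DecidableEq ι]
    [CommRing R] (f g : ι → ι → R) {p q : ι} (hpq : p ≠ q) (hp : ∀ i, f i p = g i q)
    (hq : ∀ i, f i q = g i p) :
    ∑ σ : Perm ι, ∑ S ∈ univ.filter (fun S : Finset ι => Even #S),
      ((Perm.sign σ : ℤ) : R) * ((∏ i ∈ S, f i (σ i)) * ∏ i ∈ Sᶜ, g i (σ i)) = 0 := by
  simp only [prod_mul_prod_compl_eq_prod_ite]
  rw [← sum_product']
  refine sum_involution (fun x _ => (swap p q * x.1, x.2 ∆ {x.1⁻¹ p, x.1⁻¹ q})) ?_ ?_ ?_ ?_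
  · rintro ⟨σ, S⟩ -
    simp only [ite_mem_symmDiff_swap_mul_apply f g hp hq, Perm.sign_mul, Perm.sign_swap hpq]
    push_cast
    ring
  · rintro ⟨σ, S⟩ - - h
    exact hpq (swap_eq_one_iff.mp (mul_eq_right.mp (congrArg Prod.fst h)))
  · rintro ⟨σ, S⟩ hS
    have hab : σ⁻¹ p ≠ σ⁻¹ q := σ⁻¹.injective.ne hpq
    simp only [mem_product, mem_univ, true_and, mem_filter] at hS ⊢
    rwa [even_card_symmDiff_iff (by rw [card_pair hab]; exact even_two)]
  · rintro ⟨σ, S⟩ -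
    simp only [swap_mul_self_mul, mul_inv_rev, swap_inv, Perm.mul_apply, swap_apply_left,
      swap_apply_right, pair_comm, symmDiff_symmDiff_cancel_right]

/-- The vanishing sum used in the proof of Theorem III: for `n ≥ 2`,
`∑_{σ ∈ S_n} ∑_{S ⊆ {1,…,n}, |S| even} (-1)^{inv σ}
  ∏_{i∈S} x_i^{m+2n-σ(i)-1} ∏_{i∉S} x_i^{m+σ(i)} = 0`.
With 0-indexed `σ(i)`, the exponents `m + 2n - σ(i) - 1` and `m + σ(i)` become
`m + 2n - 2 - σ i` and `m + 1 + σ i`; `(-1)^{inv σ}` is the sign of `σ`. -/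
theorem even_subset_sum_vanishes (n m : ℕ) (hn : 2 ≤ n) (R : Type*) [CommRing R]
    (x : Fin n → R) :
    ∑ σ : Equiv.Perm (Fin n),
      ∑ S ∈ Finset.univ.filter (fun S : Finset (Fin n) => Even S.card),
        ((Equiv.Perm.sign σ : ℤ) : R) *
          ((∏ i ∈ S, x i ^ (m + 2 * n - 2 - (σ i : ℕ))) *
            ∏ i ∈ Sᶜ, x i ^ (m + 1 + (σ i : ℕ))) = 0 :=
  sum_sign_mul_prod_mul_prod_compl_eq_zero (fun i j => x i ^ (m + 2 * n - 2 - (j : ℕ)))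
    (fun i j => x i ^ (m + 1 + (j : ℕ))) (p := ⟨n - 1, by omega⟩) (q := ⟨n - 2, by omega⟩)
    (Fin.ne_of_val_ne (show n - 1 ≠ n - 2 by omega)) (fun i => by dsimp only; congr 1; omega)
    (fun i => by dsimp only; congr 1; omega)
end
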